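/- Let f : 2^V → ℝ be a nonnegative submodular function on a finite ground set V, and let A be a set such that f(A ∪ {w}) ≤ f(A) for all w ∈ V \ A and f(A \ {w}) ≤ f(A) for all w ∈ A (i.e., A is a local optimum under single-element additions and deletions). Then 2·f(A) + f(V \ A) ≥ f(S) for every S ⊆ V; in particular max(f(A), f(V\A)) ≥ (1/3)·max_{S⊆V} f(S). -/

import Mathlib

/-!
Submodularity turns the local conditions into global ones: adding the elements of `C` to `A`
one at a time never increases `f`, so `f B ≤ f A` for every `B ⊇ A`, and dually (apply this to
`X ↦ f (A \ X)`) for every `B ⊆ A`. For arbitrary `S`, submodularity and nonnegativity give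
`f S ≤ f (S ∩ A) + f (S \ A)` and `f (S \ A) ≤ f (S ∪ A) + f Aᶜ`, and both `S ∩ A ⊆ A ⊆ S ∪ A`.
-/

def IsSubmodular {α : Type*} [DecidableEq α] (f : Finset α → ℝ) : Prop :=
  ∀ A B : Finset α, f (A ∪ B) + f (A ∩ B) ≤ f A + f B

namespace IsSubmodular

variable {α : Type*} [DecidableEq α] {f : Finset α → ℝ}

theorem union_le_add (hf : IsSubmodular f) {A B : Finset α} (h : 0 ≤ f (A ∩ B)) :
    f (A ∪ B) ≤ f A + f B := by
  linarith [hf A B]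

theorem inter_le_add (hf : IsSubmodular f) {A B : Finset α} (h : 0 ≤ f (A ∪ B)) :
    f (A ∩ B) ≤ f A + f B := by
  linarith [hf A B]

theorem comp_sdiff (hf : IsSubmodular f) (A : Finset α) : IsSubmodular fun X ↦ f (A \ X) := by
  intro X Y
  dsimp only
  rw [Finset.sdiff_union_distrib, Finset.sdiff_inter_distrib_right]
  linarith [hf (A \ X) (A \ Y)]

theorem le_of_subset_of_forall_insert_le (hf : IsSubmodular f) {A B : Finset α}
    (hadd : ∀ w ∉ A, f (insert w A) ≤ f A) (hAB : A ⊆ B) : f B ≤ f A := by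
  suffices ∀ C : Finset α, f (A ∪ C) ≤ f A by simpa [Finset.union_eq_right.mpr hAB] using this B
  intro C
  induction C using Finset.induction_on with
  | empty => simp
  | insert w C hwC ih =>
    by_cases hwA : w ∈ A
    · rwa [Finset.union_insert, Finset.insert_eq_of_mem (Finset.mem_union_left C hwA)]
    · have hunion : insert w A ∪ (A ∪ C) = A ∪ insert w C := by ext; simp
      have hinter : insert w A ∩ (A ∪ C) = A := by ext x; grind
      have hstep := hf (insert w A) (A ∪ C)
      rw [hunion, hinter] at hstep
      linarith [hadd w hwA]

theorem le_of_subset_of_forall_erase_le (hf : IsSubmodular f) {A B : Finset α}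
    (hdel : ∀ w ∈ A, f (A.erase w) ≤ f A) (hBA : B ⊆ A) : f B ≤ f A := by
  have hdel_dual : ∀ w ∉ (∅ : Finset α), f (A \ insert w ∅) ≤ f (A \ ∅) := by
    intro w _
    rw [insert_empty_eq, Finset.sdiff_singleton_eq_erase, Finset.sdiff_empty]
    by_cases hwA : w ∈ A
    · exact hdel w hwA
    · rw [Finset.erase_eq_of_notMem hwA]
  simpa [sdiff_sdiff_eq_self hBA] using
    (hf.comp_sdiff A).le_of_subset_of_forall_insert_le hdel_dual (Finset.empty_subset (A \ B))

theorem le_two_mul_add_compl [Fintype α] (hf : IsSubmodular f) (hnn : ∀ S, 0 ≤ f S)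
    {A : Finset α} (hadd : ∀ w ∉ A, f (insert w A) ≤ f A) (hdel : ∀ w ∈ A, f (A.erase w) ≤ f A)
    (S : Finset α) : f S ≤ 2 * f A + f Aᶜ := by
  have hsplit : f S ≤ f (S ∩ A) + f (S \ A) := by
    have h := hf.union_le_add (A := S \ A) (B := S ∩ A) (hnn _)
    rw [Finset.sdiff_union_inter] at h
    linarith
  have hdiff : f (S \ A) ≤ f (S ∪ A) + f Aᶜ := by
    have h := hf.inter_le_add (A := S ∪ A) (B := Aᶜ) (hnn _)
    rwa [Finset.union_inter_distrib_right, Finset.inter_compl, Finset.union_empty,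
      ← Finset.sdiff_eq_inter_compl] at h
  have hin : f (S ∩ A) ≤ f A :=
    hf.le_of_subset_of_forall_erase_le hdel Finset.inter_subset_right
  have hout : f (S ∪ A) ≤ f A :=
    hf.le_of_subset_of_forall_insert_le hadd Finset.subset_union_right
  linarith

end IsSubmodular

theorem local_optimum_third_approx
    {V : Type*} [Fintype V] [DecidableEq V]
    (f : Finset V → ℝ)
    (hsub : ∀ A B : Finset V, f (A ∪ B) + f (A ∩ B) ≤ f A + f B)
    (hnn : ∀ S : Finset V, 0 ≤ f S)
    (A : Finset V)
    (hadd : ∀ w ∉ A, f (insert w A) ≤ f A)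
    (hdel : ∀ w ∈ A, f (A.erase w) ≤ f A) :
    (∀ S : Finset V, 2 * f A + f (Finset.univ \ A) ≥ f S) ∧
    (∀ S : Finset V, max (f A) (f (Finset.univ \ A)) ≥ (1 / 3) * f S) := by
  have key (S : Finset V) : 2 * f A + f (Finset.univ \ A) ≥ f S := by
    rw [← Finset.compl_eq_univ_sdiff]
    exact IsSubmodular.le_two_mul_add_compl hsub hnn hadd hdel S
  refine ⟨key, fun S ↦ ?_⟩
  linarith [key S, le_max_left (f A) (f (Finset.univ \ A)),
    le_max_right (f A) (f (Finset.univ \ A))]
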